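/- If the real sequence (A_d/O_{d-1})_{d≥2} converges to a real number ℓ as d → ∞, then ℓ ≤ 2/(1+√5), i.e., ℓ is at most the inverse of the golden ratio. -/

import Mathlib

/-- The Macaulay bound `a^⟨t⟩`: writing the (unique, greedy) binomial expansion
`a = C(k(t),t) + C(k(t-1),t-1) + ⋯ + C(k(j),j)` with `k(t) > ⋯ > k(j) ≥ j ≥ 1`,
`macaulay t a = C(k(t)+1,t+1) + C(k(t-1)+1,t) + ⋯ + C(k(j)+1,j+1)`.
(The value at `t = 0` is irrelevant for the definitions below.) -/
def macaulay : ℕ → ℕ → ℕ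
  | 0, a => a
  | t+1, a =>
    if a = 0 then 0
    else
      Nat.choose (Nat.findGreatest (fun m => Nat.choose m (t+1) ≤ a) (a + t + 1) + 1) (t+2)
        + macaulay t (a - Nat.choose
            (Nat.findGreatest (fun m => Nat.choose m (t+1) ≤ a) (a + t + 1)) (t+1))

/-- A finite O-sequence `(a_0, a_1, …, a_s)`, encoded as a nonempty list of
positive integers with `a_0 = 1` and `a_{t+1} ≤ a_t^⟨t⟩` for all `1 ≤ t ≤ s-1`. -/
def IsOSeq (l : List ℕ) : Prop :=
  l ≠ [] ∧ (∀ x ∈ l, 0 < x) ∧ l.getD 0 0 = 1 ∧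
    ∀ t : ℕ, 1 ≤ t → t + 1 < l.length → l.getD (t+1) 0 ≤ macaulay t (l.getD t 0)

/-- `numOSeq d` = the number `O_d` of finite O-sequences of multiplicity `d`. -/
noncomputable def numOSeq (d : ℕ) : ℕ := {l : List ℕ | IsOSeq l ∧ l.sum = d}.ncard

/-- `numASeq d` = the number `A_d` of finite O-sequences of multiplicity `d`
whose last entry is strictly greater than `1`. -/
noncomputable def numASeq (d : ℕ) : ℕ :=
  {l : List ℕ | IsOSeq l ∧ l.sum = d ∧ 1 < l.getLastD 0}.ncard

/-- `numOCond p n k d` = the number `O(p,n,k,d)` of finite O-sequences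
`(a_0,…,a_s)` of multiplicity `d` with `s ≤ n`, `a_i = C(p-1+i, i)` for all
`0 ≤ i ≤ k` (in particular `s ≥ k`), and `a_i < C(p-1+i, i)` for `k < i ≤ s`. -/
noncomputable def numOCond (p n k d : ℕ) : ℕ :=
  {l : List ℕ | IsOSeq l ∧ l.sum = d ∧ l.length - 1 ≤ n ∧ k ≤ l.length - 1 ∧
    (∀ i ≤ k, l.getD i 0 = Nat.choose (p - 1 + i) i) ∧
    (∀ i : ℕ, k < i → i < l.length → l.getD i 0 < Nat.choose (p - 1 + i) i)}.ncard

lemma macaulay_pos (t : ℕ) {a : ℕ} (ha : 0 < a) : 0 < macaulay t a := by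
  cases t with
  | zero => exact ha
  | succ t =>
    rw [macaulay, if_neg ha.ne']
    have h1 : t + 1 ≤ Nat.findGreatest (fun m => Nat.choose m (t+1) ≤ a) (a + t + 1) :=
      Nat.le_findGreatest (by omega) (by simp [Nat.choose_self]; omega)
    have := Nat.choose_pos (n := Nat.findGreatest (fun m => Nat.choose m (t+1) ≤ a) (a + t + 1) + 1)
      (k := t + 2) (by omega)
    omega

lemma macaulay_zero_right (t : ℕ) : macaulay t 0 = 0 := by
  cases t with
  | zero => rfl
  | succ t => rw [macaulay, if_pos rfl]

lemma macaulay_one (t : ℕ) : macaulay t 1 = 1 := by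
  cases t with
  | zero => rfl
  | succ t =>
    have hK : Nat.findGreatest (fun m => Nat.choose m (t+1) ≤ 1) (1 + t + 1) = t + 1 := by
      rw [Nat.findGreatest_eq_iff]
      refine ⟨by omega, fun _ => by simp [Nat.choose_self], fun n hn hn' => ?_⟩
      have hn2 : n = t + 2 := by omega
      subst hn2
      simp [Nat.choose_succ_self_right]
    rw [macaulay, if_neg one_ne_zero, hK]
    simp [Nat.choose_self, macaulay_zero_right]

lemma getD_mem {l : List ℕ} {t : ℕ} (h : t < l.length) : l.getD t 0 ∈ l := by
  rw [List.getD_eq_getElem _ _ h]; exact List.getElem_mem h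

lemma getLastD_eq_getLast {l : List ℕ} (hl : l ≠ []) : l.getLastD 0 = l.getLast hl := by
  rw [List.getLastD_eq_getLast?, List.getLast?_eq_getLast hl]; rfl

lemma getLastD_concat' (l : List ℕ) (a : ℕ) : (l ++ [a]).getLastD 0 = a := by
  simp [List.getLastD_concat]

lemma getD_last {l : List ℕ} (hl : l ≠ []) : l.getD (l.length - 1) 0 = l.getLastD 0 := by
  have h : l.length - 1 < l.length := by
    have := List.length_pos_iff.mpr hl; omega
  rw [getLastD_eq_getLast hl, List.getLast_eq_getElem, List.getD_eq_getElem _ _ h]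

lemma isOSeq_append_iff {l : List ℕ} (hl : l ≠ []) (a : ℕ) :
    IsOSeq (l ++ [a]) ↔ IsOSeq l ∧ 0 < a ∧
      (2 ≤ l.length → a ≤ macaulay (l.length - 1) (l.getD (l.length - 1) 0)) := by
  have hlen : 0 < l.length := List.length_pos_iff.mpr hl
  constructor
  · rintro ⟨-, hpos, hhead, hmac⟩
    refine ⟨⟨hl, fun x hx => hpos x (by simp [hx]),
      by rwa [List.getD_append _ _ _ _ hlen] at hhead, fun t ht ht' => ?_⟩, hpos a (by simp),
      fun h2 => ?_⟩
    · have := hmac t ht (by simp; omega)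
      rwa [List.getD_append _ _ _ _ ht', List.getD_append _ _ _ _ (by omega)] at this
    · have := hmac (l.length - 1) (by omega) (by simp; omega)
      rwa [show l.length - 1 + 1 = l.length by omega, List.getD_append_right _ _ _ _ le_rfl,
        Nat.sub_self, List.getD_append _ _ _ _ (by omega)] at this
  · rintro ⟨⟨-, hpos, hhead, hmac⟩, ha, hlast⟩
    refine ⟨by simp, fun x hx => ?_, ?_, fun t ht ht' => ?_⟩
    · rcases List.mem_append.mp hx with h | h
      · exact hpos x h
      · simp at h; omega
    · rwa [List.getD_append _ _ _ _ hlen]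
    · simp only [List.length_append, List.length_singleton] at ht'
      rcases (Nat.lt_succ_iff.mp ht').lt_or_eq with h | h
      · rw [List.getD_append _ _ _ _ h, List.getD_append _ _ _ _ (by omega)]
        exact hmac t ht h
      · have ht1 : t + 1 - l.length = 0 := by omega
        rw [List.getD_append_right _ _ _ _ (by omega), ht1,
          List.getD_append _ _ _ _ (by omega)]
        have := hlast (by omega)
        rw [show l.length - 1 = t by omega] at this
        simpa using this

/-- The set of O-sequences of multiplicity `d`. -/
def OS (d : ℕ) : Set (List ℕ) := {l : List ℕ | IsOSeq l ∧ l.sum = d}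

/-- The set of O-sequences of multiplicity `d` with last entry `> 1`. -/
def AS (d : ℕ) : Set (List ℕ) := {l : List ℕ | IsOSeq l ∧ l.sum = d ∧ 1 < l.getLastD 0}

lemma finite_posSum (d : ℕ) :
    {l : List ℕ | (∀ x ∈ l, 0 < x) ∧ l.sum = d}.Finite := by
  rw [← Set.finite_coe_iff]
  refine Finite.of_injective
    (fun p => (⟨p.1, fun hi => p.2.1 _ hi, p.2.2⟩ : Composition d)) ?_
  rintro ⟨l₁, h₁⟩ ⟨l₂, h₂⟩ h
  simpa [Subtype.ext_iff] using congrArg Composition.blocks h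

lemma OS_finite (d : ℕ) : (OS d).Finite :=
  (finite_posSum d).subset fun l hl => ⟨hl.1.2.1, hl.2⟩

lemma AS_subset_OS (d : ℕ) : AS d ⊆ OS d := fun l hl => ⟨hl.1, hl.2.1⟩

lemma AS_finite (d : ℕ) : (AS d).Finite := (OS_finite d).subset (AS_subset_OS d)

lemma getLastD_pos {l : List ℕ} (hl : l ≠ []) (hp : ∀ x ∈ l, 0 < x) : 0 < l.getLastD 0 := by
  rw [getLastD_eq_getLast hl]
  exact hp _ (List.getLast_mem hl)

lemma length_two_le {l : List ℕ} {d : ℕ} (hd : 2 ≤ d) (hO : IsOSeq l) (hs : l.sum = d) :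
    2 ≤ l.length := by
  by_contra hc
  have h1 : l.length = 1 := by
    have := List.length_pos_iff.mpr hO.1; omega
  obtain ⟨a, rfl⟩ := List.length_eq_one_iff.mp h1
  have := hO.2.2.1
  simp at this hs
  omega

lemma numOSeq_eq (d : ℕ) : numOSeq (d + 2) = numOSeq (d + 1) + numASeq (d + 2) := by
  classical
  have himg : (fun l : List ℕ => l ++ [1]) '' OS (d+1) ∪ AS (d+2) = OS (d+2) := by
    ext m
    constructor
    · rintro (⟨l, ⟨hO, hs⟩, rfl⟩ | hm)
      · have hl : l ≠ [] := hO.1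
        refine ⟨(isOSeq_append_iff hl 1).mpr ⟨hO, one_pos, fun h2 => ?_⟩, by simp [hs]⟩
        · exact macaulay_pos _ (hO.2.1 _ (getD_mem (by omega)))
      · exact AS_subset_OS _ hm
    · rintro ⟨hO, hs⟩
      rcases eq_or_lt_of_le (show 1 ≤ m.getLastD 0 from getLastD_pos hO.1 hO.2.1) with hlast | hlast
      · left
        have hlen : 2 ≤ m.length := length_two_le (by omega) hO hs
        have hne : m ≠ [] := hO.1
        have hdne : m.dropLast ≠ [] := by
          rw [← List.length_pos_iff, List.length_dropLast]; omega
        have heq : m.dropLast ++ [1] = m := by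
          conv_rhs => rw [← List.dropLast_append_getLast hne]
          rw [← getLastD_eq_getLast hne, ← hlast]
        refine ⟨m.dropLast, ⟨?_, ?_⟩, heq⟩
        · have hO' := hO
          rw [← heq] at hO'
          exact ((isOSeq_append_iff hdne 1).mp hO').1
        · have : m.sum = m.dropLast.sum + 1 := by rw [← heq]; simp
          omega
      · exact Or.inr ⟨hO, hs, hlast⟩
  have hdisj : Disjoint ((fun l : List ℕ => l ++ [1]) '' OS (d+1)) (AS (d+2)) := by
    rw [Set.disjoint_left]
    rintro m ⟨l, -, rfl⟩ hm
    simp only [AS, Set.mem_setOf_eq, getLastD_concat'] at hm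
    exact absurd hm.2.2 (by omega)
  have hinj : Set.InjOn (fun l : List ℕ => l ++ [1]) (OS (d+1)) := by
    intro l₁ _ l₂ _ h
    simpa using h
  have : numOSeq (d+2) = ((fun l : List ℕ => l ++ [1]) '' OS (d+1)).ncard + (AS (d+2)).ncard := by
    rw [show numOSeq (d+2) = (OS (d+2)).ncard from rfl, ← himg]
    exact Set.ncard_union_eq hdisj ((OS_finite (d+2)).subset (by rw [← himg]; exact Set.subset_union_left))
      (AS_finite _)
  rw [this, Set.ncard_image_of_injOn hinj]
  rfl

lemma decompose_last {l : List ℕ} {d : ℕ} (hd : 2 ≤ d) (hO : IsOSeq l) (hs : l.sum = d) :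
    l.dropLast ≠ [] ∧ l.dropLast ++ [l.getLastD 0] = l ∧
      l.dropLast.sum + l.getLastD 0 = d := by
  have hlen : 2 ≤ l.length := length_two_le hd hO hs
  have hne : l ≠ [] := hO.1
  have hdne : l.dropLast ≠ [] := by
    rw [← List.length_pos_iff, List.length_dropLast]; omega
  have heq : l.dropLast ++ [l.getLastD 0] = l := by
    rw [getLastD_eq_getLast hne]; exact List.dropLast_append_getLast hne
  refine ⟨hdne, heq, ?_⟩
  conv_rhs => rw [← hs, ← heq]
  simp

lemma numASeq_rec (d : ℕ) : numASeq (d + 4) ≤ numASeq (d + 3) + numASeq (d + 2) := by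
  classical
  set B : Set (List ℕ) := {l | IsOSeq l ∧ l.sum = d + 4 ∧ l.getLastD 0 = 2} with hB
  set C : Set (List ℕ) := {l | IsOSeq l ∧ l.sum = d + 4 ∧ 3 ≤ l.getLastD 0} with hC
  have hsplit : AS (d+4) = B ∪ C := by
    ext l
    simp only [AS, hB, hC, Set.mem_setOf_eq, Set.mem_union]
    constructor
    · rintro ⟨h1, h2, h3⟩
      rcases eq_or_lt_of_le (show 2 ≤ l.getLastD 0 by omega) with hx | hx
      · exact Or.inl ⟨h1, h2, hx.symm⟩
      · exact Or.inr ⟨h1, h2, by omega⟩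
    · rintro (⟨h1, h2, h3⟩ | ⟨h1, h2, h3⟩) <;> exact ⟨h1, h2, by omega⟩
  have hBsub : B ⊆ AS (d+4) := by rw [hsplit]; exact Set.subset_union_left
  have hCsub : C ⊆ AS (d+4) := by rw [hsplit]; exact Set.subset_union_right
  have hdisj : Disjoint B C := by
    rw [Set.disjoint_left]
    rintro l ⟨-, -, h2⟩ ⟨-, -, h3⟩
    omega
  have hC_le : C.ncard ≤ (AS (d+3)).ncard := by
    refine Set.ncard_le_ncard_of_injOn
      (fun l => l.dropLast ++ [l.getLastD 0 - 1]) ?_ ?_ (AS_finite _)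
    · rintro l ⟨hO, hs, h3⟩
      obtain ⟨hdne, heq, hsum⟩ := decompose_last (by omega) hO hs
      have hO' := hO; rw [← heq] at hO'
      obtain ⟨hO'', hpos, hcond⟩ := (isOSeq_append_iff hdne _).mp hO'
      refine ⟨(isOSeq_append_iff hdne _).mpr
        ⟨hO'', by omega, fun h2 => le_trans (by omega) (hcond h2)⟩, ?_, ?_⟩
      · simp only [List.sum_append, List.sum_cons, List.sum_nil]
        omega
      · rw [getLastD_concat']; omega
    · rintro l₁ ⟨hO₁, hs₁, h₁3⟩ l₂ ⟨hO₂, hs₂, h₂3⟩ hf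
      obtain ⟨hdne₁, heq₁, hsum₁⟩ := decompose_last (by omega) hO₁ hs₁
      obtain ⟨hdne₂, heq₂, hsum₂⟩ := decompose_last (by omega) hO₂ hs₂
      obtain ⟨hd, ht⟩ := List.append_inj' hf rfl
      simp only [List.cons.injEq, and_true] at ht
      rw [← heq₁, ← heq₂, hd, show l₁.getLastD 0 = l₂.getLastD 0 by omega]
  have hB_le : B.ncard ≤ (AS (d+2)).ncard := by
    refine Set.ncard_le_ncard_of_injOn List.dropLast ?_ ?_ (AS_finite _)
    · rintro l ⟨hO, hs, h2⟩
      obtain ⟨hdne, heq, hsum⟩ := decompose_last (by omega) hO hs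
      have hO' := hO; rw [← heq] at hO'
      obtain ⟨hO'', hpos, hcond⟩ := (isOSeq_append_iff hdne _).mp hO'
      have hsum'' : l.dropLast.sum = d + 2 := by omega
      have hdlen2 : 2 ≤ l.dropLast.length := length_two_le (by omega) hO'' hsum''
      have hlast_pos : 0 < l.dropLast.getLastD 0 := getLastD_pos hdne hO''.2.1
      have hmac := hcond hdlen2
      rw [getD_last hdne] at hmac
      refine ⟨hO'', hsum'', ?_⟩
      rcases eq_or_lt_of_le (show 1 ≤ l.dropLast.getLastD 0 from hlast_pos) with hx | hx
      · rw [← hx, macaulay_one] at hmac; omega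
      · exact hx
    · rintro l₁ ⟨hO₁, hs₁, h₁2⟩ l₂ ⟨hO₂, hs₂, h₂2⟩ hf
      obtain ⟨hdne₁, heq₁, hsum₁⟩ := decompose_last (by omega) hO₁ hs₁
      obtain ⟨hdne₂, heq₂, hsum₂⟩ := decompose_last (by omega) hO₂ hs₂
      rw [← heq₁, ← heq₂, hf, h₁2, h₂2]
  calc numASeq (d+4) = (AS (d+4)).ncard := rfl
    _ = B.ncard + C.ncard := by
        rw [hsplit]
        exact Set.ncard_union_eq hdisj ((AS_finite (d+4)).subset hBsub)
          ((AS_finite (d+4)).subset hCsub)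
    _ ≤ (AS (d+3)).ncard + (AS (d+2)).ncard := by omega
    _ = numASeq (d+3) + numASeq (d+2) := rfl

lemma numOSeq_pos (d : ℕ) : 0 < numOSeq (d + 1) := by
  have hmem : List.replicate (d+1) 1 ∈ OS (d+1) := by
    refine ⟨⟨by simp, fun x hx => by simp [List.eq_of_mem_replicate hx], ?_, fun t ht ht' => ?_⟩,
      by simp⟩
    · rw [List.getD_eq_getElem _ _ (by simp)]
      simp
    · simp only [List.length_replicate] at ht'
      rw [List.getD_eq_getElem _ _ (by simp; omega), List.getD_eq_getElem _ _ (by simp; omega)]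
      simp [macaulay_one]
  rw [show numOSeq (d+1) = (OS (d+1)).ncard from rfl]
  exact (Set.ncard_pos (OS_finite _)).mpr ⟨_, hmem⟩


open Filter Topology in
/-- If `(A_d / O_{d-1})_{d ≥ 2}` converges to a real number `ℓ`,
then `ℓ ≤ 2/(1 + √5)`, the inverse of the golden ratio. -/
theorem Ad_ratio_limit_le_inv_goldenRatio (ℓ : ℝ)
    (h : Tendsto (fun d : ℕ => (numASeq (d + 2) : ℝ) / (numOSeq (d + 1) : ℝ))
      atTop (𝓝 ℓ)) :
    ℓ ≤ 2 / (1 + Real.sqrt 5) := by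
  set F : ℕ → ℝ := fun d : ℕ => (numASeq (d + 2) : ℝ) / (numOSeq (d + 1) : ℝ) with hF
  have hOpos : ∀ d : ℕ, (0:ℝ) < (numOSeq (d+1) : ℝ) := fun d => by
    exact_mod_cast numOSeq_pos d
  have hFnn : ∀ d, 0 ≤ F d := fun d => by
    have := (hOpos d).le
    positivity
  have hl0 : 0 ≤ ℓ := ge_of_tendsto' h hFnn
  have h1ℓ : (0:ℝ) < 1 + ℓ := by linarith
  have hg : ∀ d : ℕ, (numOSeq (d+1) : ℝ) / (numOSeq (d+2) : ℝ) = (1 + F d)⁻¹ := by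
    intro d
    have h1 := hOpos d
    have h2 := hOpos (d+1)
    have hrec : (numOSeq (d+2) : ℝ) = (numOSeq (d+1) : ℝ) + (numASeq (d+2) : ℝ) := by
      exact_mod_cast numOSeq_eq d
    rw [hF]
    rw [hrec]
    field_simp
  have key : ∀ d : ℕ, F (d+2) ≤
      F (d+1) * (1 + F (d+1))⁻¹ + F d * ((1 + F d)⁻¹ * (1 + F (d+1))⁻¹) := by
    intro d
    rw [← hg d, ← hg (d+1)]
    have h1 := hOpos d
    have h2 := hOpos (d+1)
    have h3 := hOpos (d+2)
    have e1 : F (d+1) * ((numOSeq (d+1+1) : ℝ) / (numOSeq (d+1+2) : ℝ))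
        = (numASeq (d+3) : ℝ) / (numOSeq (d+3) : ℝ) := by
      rw [hF]
      show (numASeq (d+3) : ℝ) / (numOSeq (d+2) : ℝ) * _ = _
      field_simp
    have e2 : F d * ((numOSeq (d+1) : ℝ) / (numOSeq (d+2) : ℝ) *
          ((numOSeq (d+1+1) : ℝ) / (numOSeq (d+1+2) : ℝ)))
        = (numASeq (d+2) : ℝ) / (numOSeq (d+3) : ℝ) := by
      rw [hF]
      show (numASeq (d+2) : ℝ) / (numOSeq (d+1) : ℝ) * _ = _
      field_simp
    rw [e1, e2, ← add_div]
    show (numASeq (d+4) : ℝ) / (numOSeq (d+3) : ℝ) ≤ _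
    gcongr
    exact_mod_cast numASeq_rec d
  have hS1 : Tendsto (fun d : ℕ => F (d+1)) atTop (𝓝 ℓ) := h.comp (tendsto_add_atTop_nat 1)
  have hS2 : Tendsto (fun d : ℕ => F (d+2)) atTop (𝓝 ℓ) := h.comp (tendsto_add_atTop_nat 2)
  have hinv0 : Tendsto (fun d : ℕ => (1 + F d)⁻¹) atTop (𝓝 (1+ℓ)⁻¹) :=
    (tendsto_const_nhds.add h).inv₀ h1ℓ.ne'
  have hinv1 : Tendsto (fun d : ℕ => (1 + F (d+1))⁻¹) atTop (𝓝 (1+ℓ)⁻¹) :=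
    (tendsto_const_nhds.add hS1).inv₀ h1ℓ.ne'
  have hRHS : Tendsto
      (fun d : ℕ => F (d+1) * (1 + F (d+1))⁻¹ + F d * ((1 + F d)⁻¹ * (1 + F (d+1))⁻¹))
      atTop (𝓝 (ℓ * (1+ℓ)⁻¹ + ℓ * ((1+ℓ)⁻¹ * (1+ℓ)⁻¹))) :=
    (hS1.mul hinv1).add (h.mul (hinv0.mul hinv1))
  have hmain : ℓ ≤ ℓ * (1+ℓ)⁻¹ + ℓ * ((1+ℓ)⁻¹ * (1+ℓ)⁻¹) :=
    le_of_tendsto_of_tendsto' hS2 hRHS key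
  have key2 : ℓ * (1 + ℓ)^2 ≤ ℓ * (1 + ℓ) + ℓ := by
    have hne : (1+ℓ) ≠ 0 := h1ℓ.ne'
    calc ℓ * (1+ℓ)^2 ≤ (ℓ * (1+ℓ)⁻¹ + ℓ * ((1+ℓ)⁻¹ * (1+ℓ)⁻¹)) * (1+ℓ)^2 :=
          mul_le_mul_of_nonneg_right hmain (sq_nonneg _)
      _ = ℓ * (1+ℓ) + ℓ := by field_simp
  have hs : Real.sqrt 5 ^ 2 = 5 := Real.sq_sqrt (by norm_num)
  have hs2 : 2 ≤ Real.sqrt 5 := by nlinarith [Real.sqrt_nonneg 5]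
  have hgoal : 2 / (1 + Real.sqrt 5) = (Real.sqrt 5 - 1)/2 := by
    rw [div_eq_div_iff (by nlinarith) (by norm_num)]
    nlinarith
  rw [hgoal]
  by_contra hcon
  push_neg at hcon
  nlinarith [key2, mul_pos (show (0:ℝ) < 2*ℓ+1-Real.sqrt 5 by nlinarith)
    (show (0:ℝ) < 2*ℓ+1+Real.sqrt 5 by nlinarith), hl0]
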